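/- In the modified quantum superalgebra U̇ of osp(1|2), the assignments φ(Ẽ_{λ,λ-2}) = t^{λ+p(λ)} E_{λ,λ-2}, φ(F̃_{λ,λ+2}) = F_{λ,λ+2}, φ(1̃_λ) = 1_λ (for all λ ∈ ℤ) define an algebra isomorphism φ: U̇(sl(2)) → U̇, with inverse given by E_{λ,λ-2} ↦ t^{-λ-p(λ)} Ẽ_{λ,λ-2}, F_{λ,λ+2} ↦ F̃_{λ,λ+2}, 1_λ ↦ 1̃_λ. -/

import Mathlib

noncomputable section

/-- The quantum integer `[a]_v` for an integer `a`. -/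
def qintz {F : Type*} [Field F] (v : F) (a : ℤ) : F := (v ^ a - v ^ (-a)) / (v - v⁻¹)

/-- The parity function `p(λ)`: `0` for even `λ`, `1` for odd `λ`. -/
def par (a : ℤ) : ℤ := if Even a then 0 else 1

/-- The defining relations of the modified quantum superalgebra `U̇` of `osp(1|2)`:
generators `1_λ = ι (0,λ)`, `E_{λ,λ-2} = ι (1,λ)`, `F_{λ,λ+2} = ι (2,λ)` for `λ ∈ ℤ`,
with orthogonal idempotent relations, idempotent compatibility, and
`E_{λ,λ-2}F_{λ-2,λ} − t² F_{λ,λ+2}E_{λ+2,λ} = t^(-λ-p(λ)) [λ]_v 1_λ`. -/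
inductive UdotRel (F : Type) [Field F] (v t : F) :
    FreeAlgebra F (Fin 3 × ℤ) → FreeAlgebra F (Fin 3 × ℤ) → Prop
  | one_one (a b : ℤ) :
      UdotRel F v t (FreeAlgebra.ι F ((0 : Fin 3), a) * FreeAlgebra.ι F ((0 : Fin 3), b))
        (if a = b then FreeAlgebra.ι F ((0 : Fin 3), a) else 0)
  | E_one (a b : ℤ) :
      UdotRel F v t (FreeAlgebra.ι F ((1 : Fin 3), a) * FreeAlgebra.ι F ((0 : Fin 3), b))
        (if b = a - 2 then FreeAlgebra.ι F ((1 : Fin 3), a) else 0)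
  | one_E (a b : ℤ) :
      UdotRel F v t (FreeAlgebra.ι F ((0 : Fin 3), b) * FreeAlgebra.ι F ((1 : Fin 3), a))
        (if b = a then FreeAlgebra.ι F ((1 : Fin 3), a) else 0)
  | F_one (a b : ℤ) :
      UdotRel F v t (FreeAlgebra.ι F ((2 : Fin 3), a) * FreeAlgebra.ι F ((0 : Fin 3), b))
        (if b = a + 2 then FreeAlgebra.ι F ((2 : Fin 3), a) else 0)
  | one_F (a b : ℤ) :
      UdotRel F v t (FreeAlgebra.ι F ((0 : Fin 3), b) * FreeAlgebra.ι F ((2 : Fin 3), a))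
        (if b = a then FreeAlgebra.ι F ((2 : Fin 3), a) else 0)
  | comm (a : ℤ) :
      UdotRel F v t
        (FreeAlgebra.ι F ((1 : Fin 3), a) * FreeAlgebra.ι F ((2 : Fin 3), a - 2)
          - t ^ 2 • (FreeAlgebra.ι F ((2 : Fin 3), a) * FreeAlgebra.ι F ((1 : Fin 3), a + 2)))
        ((t ^ (-(a + par a)) * qintz v a) • FreeAlgebra.ι F ((0 : Fin 3), a))

/-- The modified quantum superalgebra `U̇` of `osp(1|2)`. -/
abbrev Udot (F : Type) [Field F] (v t : F) := RingQuot (UdotRel F v t)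

/-- The idempotent generator `1_λ` of `U̇`. -/
def Udone (F : Type) [Field F] (v t : F) (a : ℤ) : Udot F v t :=
  RingQuot.mkAlgHom F (UdotRel F v t) (FreeAlgebra.ι F ((0 : Fin 3), a))

/-- The generator `E_{λ,λ-2}` of `U̇`. -/
def UdE (F : Type) [Field F] (v t : F) (a : ℤ) : Udot F v t :=
  RingQuot.mkAlgHom F (UdotRel F v t) (FreeAlgebra.ι F ((1 : Fin 3), a))

/-- The generator `F_{λ,λ+2}` of `U̇`. -/
def UdF (F : Type) [Field F] (v t : F) (a : ℤ) : Udot F v t :=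
  RingQuot.mkAlgHom F (UdotRel F v t) (FreeAlgebra.ι F ((2 : Fin 3), a))

/-- The defining relations of Lusztig's modified quantum algebra `U̇(sl(2))`:
generators `1̃_λ = ι (0,λ)`, `Ẽ_{λ,λ-2} = ι (1,λ)`, `F̃_{λ,λ+2} = ι (2,λ)` for `λ ∈ ℤ`,
with the analogous idempotent relations and
`Ẽ_{λ,λ-2}F̃_{λ-2,λ} − F̃_{λ,λ+2}Ẽ_{λ+2,λ} = [λ]_v 1̃_λ`. -/
inductive Usl2Rel (F : Type) [Field F] (v : F) :
    FreeAlgebra F (Fin 3 × ℤ) → FreeAlgebra F (Fin 3 × ℤ) → Prop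
  | one_one (a b : ℤ) :
      Usl2Rel F v (FreeAlgebra.ι F ((0 : Fin 3), a) * FreeAlgebra.ι F ((0 : Fin 3), b))
        (if a = b then FreeAlgebra.ι F ((0 : Fin 3), a) else 0)
  | E_one (a b : ℤ) :
      Usl2Rel F v (FreeAlgebra.ι F ((1 : Fin 3), a) * FreeAlgebra.ι F ((0 : Fin 3), b))
        (if b = a - 2 then FreeAlgebra.ι F ((1 : Fin 3), a) else 0)
  | one_E (a b : ℤ) :
      Usl2Rel F v (FreeAlgebra.ι F ((0 : Fin 3), b) * FreeAlgebra.ι F ((1 : Fin 3), a))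
        (if b = a then FreeAlgebra.ι F ((1 : Fin 3), a) else 0)
  | F_one (a b : ℤ) :
      Usl2Rel F v (FreeAlgebra.ι F ((2 : Fin 3), a) * FreeAlgebra.ι F ((0 : Fin 3), b))
        (if b = a + 2 then FreeAlgebra.ι F ((2 : Fin 3), a) else 0)
  | one_F (a b : ℤ) :
      Usl2Rel F v (FreeAlgebra.ι F ((0 : Fin 3), b) * FreeAlgebra.ι F ((2 : Fin 3), a))
        (if b = a then FreeAlgebra.ι F ((2 : Fin 3), a) else 0)
  | comm (a : ℤ) :
      Usl2Rel F v
        (FreeAlgebra.ι F ((1 : Fin 3), a) * FreeAlgebra.ι F ((2 : Fin 3), a - 2)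
          - FreeAlgebra.ι F ((2 : Fin 3), a) * FreeAlgebra.ι F ((1 : Fin 3), a + 2))
        (qintz v a • FreeAlgebra.ι F ((0 : Fin 3), a))

/-- Lusztig's modified quantum algebra `U̇(sl(2))`. -/
abbrev Usl2dot (F : Type) [Field F] (v : F) := RingQuot (Usl2Rel F v)

/-- The idempotent generator `1̃_λ` of `U̇(sl(2))`. -/
def Usone (F : Type) [Field F] (v : F) (a : ℤ) : Usl2dot F v :=
  RingQuot.mkAlgHom F (Usl2Rel F v) (FreeAlgebra.ι F ((0 : Fin 3), a))

/-- The generator `Ẽ_{λ,λ-2}` of `U̇(sl(2))`. -/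
def UsE (F : Type) [Field F] (v : F) (a : ℤ) : Usl2dot F v :=
  RingQuot.mkAlgHom F (Usl2Rel F v) (FreeAlgebra.ι F ((1 : Fin 3), a))

/-- The generator `F̃_{λ,λ+2}` of `U̇(sl(2))`. -/
def UsF (F : Type) [Field F] (v : F) (a : ℤ) : Usl2dot F v :=
  RingQuot.mkAlgHom F (Usl2Rel F v) (FreeAlgebra.ι F ((2 : Fin 3), a))

/-! Both algebras are presented by the same idempotent relations and differ only in the
commutator relation `E_λ F_{λ-2} - q F_λ E_{λ+2} = c_λ 1_λ`. Replacing `E_λ` by `s_λ E_λ` keeps the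
idempotent relations and changes `(q, c)` into `(q', s c)` whenever `q' s_{λ+2} = s_λ q`. Since
`p(λ + 2) = p(λ)`, the scalars `s_λ = t^{λ+p(λ)}` satisfy `s_{λ+2} = t² s_λ`, so they carry the
relations of `U̇` (`q = t²`, `c_λ = t^{-λ-p(λ)} [λ]`) to those of `U̇(sl(2))` (`q = 1`, `c_λ = [λ]`),
and their inverses go back. The two induced homomorphisms are inverse to each other on
generators. -/

theorem par_add_two (a : ℤ) : par (a + 2) = par a := by
  simp [par]

theorem zpow_add_two_add_par {F : Type} [Field F] {t : F} (ht : t ≠ 0) (a : ℤ) :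
    t ^ (a + 2 + par (a + 2)) = t ^ (a + par a) * t ^ 2 := by
  rw [par_add_two, ← zpow_natCast, ← zpow_add₀ ht]
  ring_nf

structure IsSl2Family {F A : Type} [Field F] [Ring A] [Algebra F A] (q : F) (c : ℤ → F)
    (one E Fg : ℤ → A) : Prop where
  one_mul_one (a b : ℤ) : one a * one b = if a = b then one a else 0
  E_mul_one (a b : ℤ) : E a * one b = if b = a - 2 then E a else 0
  one_mul_E (a b : ℤ) : one b * E a = if b = a then E a else 0
  Fg_mul_one (a b : ℤ) : Fg a * one b = if b = a + 2 then Fg a else 0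
  one_mul_Fg (a b : ℤ) : one b * Fg a = if b = a then Fg a else 0
  E_mul_Fg_sub (a : ℤ) : E a * Fg (a - 2) - q • (Fg a * E (a + 2)) = c a • one a

namespace IsSl2Family

variable {F A : Type} [Field F] [Ring A] [Algebra F A] {q : F} {c : ℤ → F} {one E Fg : ℤ → A}

theorem rescale (h : IsSl2Family q c one E Fg) {q' : F} (s c' : ℤ → F)
    (hs : ∀ a, q' * s (a + 2) = s a * q) (hc : ∀ a, c' a = s a * c a) :
    IsSl2Family q' c' one (fun a => s a • E a) Fg where
  one_mul_one := h.one_mul_one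
  E_mul_one a b := by rw [smul_mul_assoc, h.E_mul_one, smul_ite, smul_zero]
  one_mul_E a b := by rw [mul_smul_comm, h.one_mul_E, smul_ite, smul_zero]
  Fg_mul_one := h.Fg_mul_one
  one_mul_Fg := h.one_mul_Fg
  E_mul_Fg_sub a := by
    rw [smul_mul_assoc, mul_smul_comm, smul_smul, hs, ← smul_smul, ← smul_sub, h.E_mul_Fg_sub,
      smul_smul, hc]

end IsSl2Family

section Presentations

variable {F A : Type} [Field F] [Ring A] [Algebra F A] {v t : F} {one E Fg : ℤ → A}

theorem ringQuot_freeAlgebra_algHom_ext {X : Type} {r : FreeAlgebra F X → FreeAlgebra F X → Prop}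
    {f g : RingQuot r →ₐ[F] A}
    (h : ∀ x, f (RingQuot.mkAlgHom F r (FreeAlgebra.ι F x)) =
      g (RingQuot.mkAlgHom F r (FreeAlgebra.ι F x))) : f = g :=
  RingQuot.ringQuot_ext' F _ _ (FreeAlgebra.hom_ext (funext h))

theorem IsSl2Family.lift_respects_usl2Rel (h : IsSl2Family 1 (qintz v) one E Fg) :
    ∀ ⦃x y⦄, Usl2Rel F v x y → FreeAlgebra.lift F (Function.uncurry ![one, E, Fg]) x =
      FreeAlgebra.lift F (Function.uncurry ![one, E, Fg]) y := by
  intro x y hr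
  cases hr <;> simp only [map_mul, map_sub, map_smul, map_zero, apply_ite (FreeAlgebra.lift F _),
    FreeAlgebra.lift_ι_apply] <;> simp [h.one_mul_one, h.E_mul_one, h.one_mul_E, h.Fg_mul_one,
    h.one_mul_Fg, by simpa using h.E_mul_Fg_sub]

theorem IsSl2Family.lift_respects_udotRel
    (h : IsSl2Family (t ^ 2) (fun a => t ^ (-(a + par a)) * qintz v a) one E Fg) :
    ∀ ⦃x y⦄, UdotRel F v t x y → FreeAlgebra.lift F (Function.uncurry ![one, E, Fg]) x =
      FreeAlgebra.lift F (Function.uncurry ![one, E, Fg]) y := by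
  intro x y hr
  cases hr <;> simp only [map_mul, map_sub, map_smul, map_zero, apply_ite (FreeAlgebra.lift F _),
    FreeAlgebra.lift_ι_apply] <;> simp [h.one_mul_one, h.E_mul_one, h.one_mul_E, h.Fg_mul_one,
    h.one_mul_Fg, h.E_mul_Fg_sub]

theorem isSl2Family_usl2dot :
    IsSl2Family 1 (qintz v) (Usone F v) (UsE F v) (UsF F v) where
  one_mul_one a b := by
    simpa [Usone, apply_ite] using RingQuot.mkAlgHom_rel F (Usl2Rel.one_one (v := v) a b)
  E_mul_one a b := by
    simpa [UsE, Usone, apply_ite] using RingQuot.mkAlgHom_rel F (Usl2Rel.E_one (v := v) a b)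
  one_mul_E a b := by
    simpa [UsE, Usone, apply_ite] using RingQuot.mkAlgHom_rel F (Usl2Rel.one_E (v := v) a b)
  Fg_mul_one a b := by
    simpa [UsF, Usone, apply_ite] using RingQuot.mkAlgHom_rel F (Usl2Rel.F_one (v := v) a b)
  one_mul_Fg a b := by
    simpa [UsF, Usone, apply_ite] using RingQuot.mkAlgHom_rel F (Usl2Rel.one_F (v := v) a b)
  E_mul_Fg_sub a := by
    simpa [UsE, UsF, Usone] using RingQuot.mkAlgHom_rel F (Usl2Rel.comm (v := v) a)

theorem isSl2Family_udot :
    IsSl2Family (t ^ 2) (fun a => t ^ (-(a + par a)) * qintz v a)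
      (Udone F v t) (UdE F v t) (UdF F v t) where
  one_mul_one a b := by
    simpa [Udone, apply_ite]
      using RingQuot.mkAlgHom_rel F (UdotRel.one_one (v := v) (t := t) a b)
  E_mul_one a b := by
    simpa [UdE, Udone, apply_ite]
      using RingQuot.mkAlgHom_rel F (UdotRel.E_one (v := v) (t := t) a b)
  one_mul_E a b := by
    simpa [UdE, Udone, apply_ite]
      using RingQuot.mkAlgHom_rel F (UdotRel.one_E (v := v) (t := t) a b)
  Fg_mul_one a b := by
    simpa [UdF, Udone, apply_ite]
      using RingQuot.mkAlgHom_rel F (UdotRel.F_one (v := v) (t := t) a b)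
  one_mul_Fg a b := by
    simpa [UdF, Udone, apply_ite]
      using RingQuot.mkAlgHom_rel F (UdotRel.one_F (v := v) (t := t) a b)
  E_mul_Fg_sub a := by
    simpa [UdE, UdF, Udone] using RingQuot.mkAlgHom_rel F (UdotRel.comm (v := v) (t := t) a)

def Usl2dot.lift (h : IsSl2Family 1 (qintz v) one E Fg) : Usl2dot F v →ₐ[F] A :=
  RingQuot.liftAlgHom F ⟨_, h.lift_respects_usl2Rel⟩

def Udot.lift (h : IsSl2Family (t ^ 2) (fun a => t ^ (-(a + par a)) * qintz v a) one E Fg) :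
    Udot F v t →ₐ[F] A :=
  RingQuot.liftAlgHom F ⟨_, h.lift_respects_udotRel⟩

@[simp] theorem Usl2dot.lift_Usone (h : IsSl2Family 1 (qintz v) one E Fg) (a : ℤ) :
    Usl2dot.lift h (Usone F v a) = one a := by
  simp [Usl2dot.lift, Usone]

@[simp] theorem Usl2dot.lift_UsE (h : IsSl2Family 1 (qintz v) one E Fg) (a : ℤ) :
    Usl2dot.lift h (UsE F v a) = E a := by
  simp [Usl2dot.lift, UsE]

@[simp] theorem Usl2dot.lift_UsF (h : IsSl2Family 1 (qintz v) one E Fg) (a : ℤ) :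
    Usl2dot.lift h (UsF F v a) = Fg a := by
  simp [Usl2dot.lift, UsF]

@[simp] theorem Udot.lift_Udone
    (h : IsSl2Family (t ^ 2) (fun a => t ^ (-(a + par a)) * qintz v a) one E Fg) (a : ℤ) :
    Udot.lift h (Udone F v t a) = one a := by
  simp [Udot.lift, Udone]

@[simp] theorem Udot.lift_UdE
    (h : IsSl2Family (t ^ 2) (fun a => t ^ (-(a + par a)) * qintz v a) one E Fg) (a : ℤ) :
    Udot.lift h (UdE F v t a) = E a := by
  simp [Udot.lift, UdE]

@[simp] theorem Udot.lift_UdF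
    (h : IsSl2Family (t ^ 2) (fun a => t ^ (-(a + par a)) * qintz v a) one E Fg) (a : ℤ) :
    Udot.lift h (UdF F v t a) = Fg a := by
  simp [Udot.lift, UdF]

theorem Usl2dot.algHom_ext {f g : Usl2dot F v →ₐ[F] A}
    (h_one : ∀ a, f (Usone F v a) = g (Usone F v a))
    (h_E : ∀ a, f (UsE F v a) = g (UsE F v a)) (h_F : ∀ a, f (UsF F v a) = g (UsF F v a)) :
    f = g :=
  ringQuot_freeAlgebra_algHom_ext fun ⟨i, a⟩ => by
    fin_cases i
    exacts [h_one a, h_E a, h_F a]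

theorem Udot.algHom_ext {f g : Udot F v t →ₐ[F] A}
    (h_one : ∀ a, f (Udone F v t a) = g (Udone F v t a))
    (h_E : ∀ a, f (UdE F v t a) = g (UdE F v t a))
    (h_F : ∀ a, f (UdF F v t a) = g (UdF F v t a)) :
    f = g :=
  ringQuot_freeAlgebra_algHom_ext fun ⟨i, a⟩ => by
    fin_cases i
    exacts [h_one a, h_E a, h_F a]

end Presentations

theorem modified_osp_iso_modified_sl2_general (F : Type) [Field F] (v t : F)
    (ht : t ^ 2 = -1) :
    ∃ (φ : Usl2dot F v →ₐ[F] Udot F v t) (φ' : Udot F v t →ₐ[F] Usl2dot F v),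
      (∀ a : ℤ, φ (UsE F v a) = t ^ (a + par a) • UdE F v t a) ∧
      (∀ a : ℤ, φ (UsF F v a) = UdF F v t a) ∧
      (∀ a : ℤ, φ (Usone F v a) = Udone F v t a) ∧
      (∀ a : ℤ, φ' (UdE F v t a) = t ^ (-(a + par a)) • UsE F v a) ∧
      (∀ a : ℤ, φ' (UdF F v t a) = UsF F v a) ∧
      (∀ a : ℤ, φ' (Udone F v t a) = Usone F v a) ∧
      φ.comp φ' = AlgHom.id F (Udot F v t) ∧
      φ'.comp φ = AlgHom.id F (Usl2dot F v) := by
  have ht0 : t ≠ 0 := by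
    rintro rfl
    norm_num at ht
  have hφ := (isSl2Family_udot (v := v) (t := t)).rescale (q' := 1) (fun a => t ^ (a + par a))
    (qintz v) (fun a => by rw [one_mul, zpow_add_two_add_par ht0])
    (fun a => by rw [← mul_assoc, ← zpow_add₀ ht0, add_neg_cancel, zpow_zero, one_mul])
  have hφ' := (isSl2Family_usl2dot (v := v)).rescale (q' := t ^ 2) (fun a => t ^ (-(a + par a)))
    (fun a => t ^ (-(a + par a)) * qintz v a)
    (fun a => by rw [zpow_neg, zpow_add_two_add_par ht0, zpow_neg]; field_simp) (fun _ => rfl)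
  refine ⟨Usl2dot.lift hφ, Udot.lift hφ', Usl2dot.lift_UsE hφ, Usl2dot.lift_UsF hφ,
    Usl2dot.lift_Usone hφ, Udot.lift_UdE hφ', Udot.lift_UdF hφ', Udot.lift_Udone hφ', ?_, ?_⟩
  · refine Udot.algHom_ext (fun a => by simp) (fun a => ?_) (fun a => by simp)
    simp only [AlgHom.comp_apply, Udot.lift_UdE, map_smul, Usl2dot.lift_UsE, smul_smul,
      AlgHom.id_apply]
    rw [← zpow_add₀ ht0, neg_add_cancel, zpow_zero, one_smul]
  · refine Usl2dot.algHom_ext (fun a => by simp) (fun a => ?_) (fun a => by simp)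
    simp only [AlgHom.comp_apply, Usl2dot.lift_UsE, map_smul, Udot.lift_UdE, smul_smul,
      AlgHom.id_apply]
    rw [← zpow_add₀ ht0, add_neg_cancel, zpow_zero, one_smul]

/-- the assignments `φ(Ẽ_{λ,λ-2}) = t^(λ+p(λ)) E_{λ,λ-2}`,
`φ(F̃_{λ,λ+2}) = F_{λ,λ+2}`, `φ(1̃_λ) = 1_λ` define an algebra isomorphism
`φ : U̇(sl(2)) → U̇`, with inverse given by `E_{λ,λ-2} ↦ t^(-λ-p(λ)) Ẽ_{λ,λ-2}`,
`F_{λ,λ+2} ↦ F̃_{λ,λ+2}`, `1_λ ↦ 1̃_λ`. -/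
theorem modified_osp_iso_modified_sl2 (F : Type) [Field F] (v t : F)
    (ht : t ^ 2 = -1) (hv : v ≠ 0) :
    ∃ (φ : Usl2dot F v →ₐ[F] Udot F v t) (φ' : Udot F v t →ₐ[F] Usl2dot F v),
      (∀ a : ℤ, φ (UsE F v a) = t ^ (a + par a) • UdE F v t a) ∧
      (∀ a : ℤ, φ (UsF F v a) = UdF F v t a) ∧
      (∀ a : ℤ, φ (Usone F v a) = Udone F v t a) ∧
      (∀ a : ℤ, φ' (UdE F v t a) = t ^ (-(a + par a)) • UsE F v a) ∧
      (∀ a : ℤ, φ' (UdF F v t a) = UsF F v a) ∧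
      (∀ a : ℤ, φ' (Udone F v t a) = Usone F v a) ∧
      φ.comp φ' = AlgHom.id F (Udot F v t) ∧
      φ'.comp φ = AlgHom.id F (Usl2dot F v) :=
  modified_osp_iso_modified_sl2_general F v t ht
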